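/- Consider one stage of SHVar's allocation: a finite set A of k arms with positive variances σ_i², budget n_s rounds, where in each round t ∈ {1,…,n_s} the pulled arm I_t is any arm maximizing σ_i²/N_{t,i} over i ∈ A, with N_{t,i} the number of pulls of arm i before round t (convention σ_i²/0 = +∞). Let σ_max² = max_{i∈A} σ_i² and let N_i be the total number of pulls of arm i after the n_s rounds. Then for every arm i ∈ A, N_i ≥ (σ_i²/σ_max²) · (n_s/k − 1). -/

import Mathlib

/-!
Pick an arm `j` pulled at least `n_s / k` times (pigeonhole). The greedy rule keeps the
allocation balanced: at every round, `σ_i² (N_j - 1) ≤ σ_j² N_i` for all arms `i, j`, because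
`N_j` grows only when `j` is pulled, and then `σ_i² / N_i ≤ σ_j² / N_j` held just before.
Taking `σ_j² ≤ σ_max²` gives the bound.
-/

open Finset
open scoped ENNReal

theorem mul_natCast_le_of_ofReal_div_le {a b : ℝ} {m n : ℕ} (hb : 0 ≤ b)
    (h : ENNReal.ofReal a / m ≤ ENNReal.ofReal b / n) : a * n ≤ b * m := by
  rcases le_or_gt a 0 with ha | ha
  · exact (mul_nonpos_of_nonpos_of_nonneg ha n.cast_nonneg).trans (mul_nonneg hb m.cast_nonneg)
  rcases Nat.eq_zero_or_pos n with rfl | hn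
  · simpa using mul_nonneg hb m.cast_nonneg
  have hm : 0 < m := by
    refine Nat.pos_of_ne_zero fun hm => ?_
    rw [hm, Nat.cast_zero, ENNReal.div_zero (ENNReal.ofReal_pos.mpr ha).ne', top_le_iff] at h
    exact ENNReal.div_ne_top ENNReal.ofReal_ne_top (by exact_mod_cast hn.ne') h
  rw [← ENNReal.ofReal_natCast m, ← ENNReal.ofReal_natCast n,
    ← ENNReal.ofReal_div_of_pos (by exact_mod_cast hm),
    ← ENNReal.ofReal_div_of_pos (by exact_mod_cast hn),
    ENNReal.ofReal_le_ofReal_iff (by positivity), div_le_div_iff₀ (by exact_mod_cast hm)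
    (by exact_mod_cast hn)] at h
  exact h

namespace SHVar

variable {ι : Type*} [DecidableEq ι]

def pullCount (I : ℕ → ι) (t : ℕ) (i : ι) : ℕ := #{ℓ ∈ range t | I ℓ = i}

theorem pullCount_zero (I : ℕ → ι) (i : ι) : pullCount I 0 i = 0 := by
  simp [pullCount]

theorem pullCount_succ (I : ℕ → ι) (t : ℕ) (i : ι) :
    pullCount I (t + 1) i = pullCount I t i + if I t = i then 1 else 0 := by
  unfold pullCount
  rw [range_add_one, filter_insert]
  split_ifs
  · exact card_insert_of_notMem (by simp)
  · rfl

theorem pullCount_mono (I : ℕ → ι) (i : ι) : Monotone (pullCount I · i) :=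
  monotone_nat_of_le_succ fun t => by
    rw [pullCount_succ]
    exact Nat.le_add_right _ _

theorem exists_div_card_le_pullCount [Fintype ι] [Nonempty ι] (I : ℕ → ι) (t : ℕ) :
    ∃ j, (t : ℝ) / Fintype.card ι ≤ pullCount I t j := by
  have hcard : (0 : ℝ) < Fintype.card ι := by exact_mod_cast Fintype.card_pos
  obtain ⟨j, -, hj⟩ := exists_le_card_fiber_of_nsmul_le_card_of_maps_to
    (s := range t) (f := I) (fun _ _ => mem_univ _) univ_nonempty
    (b := (t : ℝ) / Fintype.card ι) (by simp [nsmul_eq_mul, mul_div_cancel₀ _ hcard.ne'])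
  exact ⟨j, hj⟩

def IsGreedyUpTo (v : ι → ℝ) (I : ℕ → ι) (ns : ℕ) : Prop :=
  ∀ t < ns, ∀ j, ENNReal.ofReal (v j) / (pullCount I t j : ℝ≥0∞)
    ≤ ENNReal.ofReal (v (I t)) / (pullCount I t (I t) : ℝ≥0∞)

theorem IsGreedyUpTo.balanced {v : ι → ℝ} {I : ℕ → ι} {ns : ℕ} (hgreedy : IsGreedyUpTo v I ns)
    (hv : ∀ i, 0 ≤ v i) :
    ∀ t ≤ ns, ∀ i j, v i * ((pullCount I t j : ℝ) - 1) ≤ v j * pullCount I t i := by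
  intro t
  induction t with
  | zero => simpa [pullCount_zero] using fun i _ => hv i
  | succ t ih =>
    intro ht i j
    have hgrow : (pullCount I t i : ℝ) ≤ pullCount I (t + 1) i := by
      exact_mod_cast pullCount_mono I i t.le_succ
    by_cases hj : I t = j
    · subst hj
      calc v i * ((pullCount I (t + 1) (I t) : ℝ) - 1) = v i * pullCount I t (I t) := by
            simp [pullCount_succ]
        _ ≤ v (I t) * pullCount I t i :=
            mul_natCast_le_of_ofReal_div_le (hv _) (hgreedy t ht i)
        _ ≤ v (I t) * pullCount I (t + 1) i := by gcongr; exact hv _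
    · calc v i * ((pullCount I (t + 1) j : ℝ) - 1) = v i * ((pullCount I t j : ℝ) - 1) := by
            simp [pullCount_succ, hj]
        _ ≤ v j * pullCount I t i := ih (by omega) i j
        _ ≤ v j * pullCount I (t + 1) i := by gcongr; exact hv _

end SHVar

open SHVar

theorem shvar_stage_pull_lower_bound_general
    {ι : Type*} [Fintype ι] [DecidableEq ι]
    (k : ℕ) (hk : Fintype.card ι = k)
    (v : ι → ℝ) (hv : ∀ i, 0 < v i)
    (vmax : ℝ) (hvmax : IsGreatest (Set.range v) vmax)
    (ns : ℕ) (I : ℕ → ι)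
    (N : ℕ → ι → ℕ)
    (hN : ∀ t i, N t i = ((Finset.range t).filter (fun ℓ => I ℓ = i)).card)
    (hgreedy : ∀ t < ns, ∀ j : ι,
      ENNReal.ofReal (v j) / (N t j : ℝ≥0∞)
        ≤ ENNReal.ofReal (v (I t)) / (N t (I t) : ℝ≥0∞)) :
    ∀ i : ι, (N ns i : ℝ) ≥ v i / vmax * ((ns : ℝ) / k - 1) := by
  obtain rfl : N = pullCount I := funext fun t => funext (hN t)
  intro i
  have : Nonempty ι := ⟨i⟩
  obtain ⟨⟨m, rfl⟩, hvmax⟩ := hvmax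
  obtain ⟨j, hj⟩ := exists_div_card_le_pullCount I ns
  rw [hk] at hj
  have hbal := IsGreedyUpTo.balanced hgreedy (fun i => (hv i).le) ns le_rfl i j
  rw [ge_iff_le, div_mul_eq_mul_div, div_le_iff₀ (hv m)]
  calc v i * ((ns : ℝ) / k - 1) ≤ v i * ((pullCount I ns j : ℝ) - 1) := by
        gcongr; exact (hv i).le
    _ ≤ v j * pullCount I ns i := hbal
    _ ≤ pullCount I ns i * v m := by rw [mul_comm]; gcongr; exact hvmax ⟨j, rfl⟩

/-- One stage of `SHVar`'s allocation: a finite type of `k` arms with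
positive variances `v i = σ_i²`, budget `ns` rounds, where in each round `t < ns` the
pulled arm `I t` maximizes `v i / N t i` (pull counts `N t i = #{ℓ < t : I ℓ = i}`, with
the convention `x / 0 = ∞`, expressed in `ℝ≥0∞`).  With `σ_max² = max_i v i`, the total
number of pulls of every arm `i` satisfies `N_i ≥ (v i / σ_max²) · (ns / k − 1)`. -/
theorem shvar_stage_pull_lower_bound
    {ι : Type*} [Fintype ι] [DecidableEq ι] [Nonempty ι]
    (k : ℕ) (hk : Fintype.card ι = k)
    (v : ι → ℝ) (hv : ∀ i, 0 < v i)
    (vmax : ℝ) (hvmax : IsGreatest (Set.range v) vmax)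
    (ns : ℕ) (I : ℕ → ι)
    (N : ℕ → ι → ℕ)
    (hN : ∀ t i, N t i = ((Finset.range t).filter (fun ℓ => I ℓ = i)).card)
    (hgreedy : ∀ t < ns, ∀ j : ι,
      ENNReal.ofReal (v j) / (N t j : ℝ≥0∞)
        ≤ ENNReal.ofReal (v (I t)) / (N t (I t) : ℝ≥0∞)) :
    ∀ i : ι, (N ns i : ℝ) ≥ v i / vmax * ((ns : ℝ) / k - 1) :=
  shvar_stage_pull_lower_bound_general k hk v hv vmax hvmax ns I N hN hgreedy
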